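/- arXiv:0812.1375 — 6 statements merged into one kernel-verified Lean document; each statement's English description precedes it below -/
import Mathlib

section
/- Let n ≥ 1 and let β : Fin n → ℝ. Define the symmetric n×n real matrix H by H i j = β (max i j) (i.e., H i j = β i for j ≤ i and H i j = β j for i ≤ j). Then H is congruent (via a unimodular change of basis) to the diagonal matrix with diagonal entries β 0 − β 1, β 1 − β 2, …, β (n−2) − β (n−1), β (n−1). In particular, the quadratic form x ↦ xᵀ H x equals Σ_{k=0}^{n-2} (β k − β (k+1)) (x_0 + ⋯ + x_k)² + β (n−1) (x_0 + ⋯ + x_{n−1})². -/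
open Matrix

private lemma flat_tele (n : ℕ) (β : Fin n → ℝ) (D : Fin n → ℝ)
    (hD : ∀ k : Fin n, D k = if h : (k : ℕ) + 1 < n then β k - β ⟨(k : ℕ) + 1, h⟩ else β k) :
    ∀ m : Fin n, ∑ k ∈ Finset.univ.filter (fun k : Fin n => m ≤ k), D k = β m := by
  suffices h : ∀ j : ℕ, ∀ m : Fin n, n ≤ (m : ℕ) + 1 + j →
      ∑ k ∈ Finset.univ.filter (fun k : Fin n => m ≤ k), D k = β m by
    intro m; exact h n m (by omega)
  intro j
  induction j with
  | zero =>
    intro m hm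
    have hs : Finset.univ.filter (fun k : Fin n => m ≤ k) = {m} := by
      ext k
      simp only [Finset.mem_filter, Finset.mem_univ, true_and, Finset.mem_singleton,
        Fin.le_def, Fin.ext_iff]
      omega
    rw [hs, Finset.sum_singleton, hD, dif_neg (by omega)]
  | succ j ih =>
    intro m hm
    by_cases h : (m : ℕ) + 1 < n
    · set m' : Fin n := ⟨(m : ℕ) + 1, h⟩ with hm'
      have hs : Finset.univ.filter (fun k : Fin n => m ≤ k)
          = insert m (Finset.univ.filter (fun k : Fin n => m' ≤ k)) := by
        ext k
        simp only [Finset.mem_filter, Finset.mem_univ, true_and, Finset.mem_insert,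
          Fin.le_def, Fin.ext_iff, hm']
        omega
      have hnot : m ∉ Finset.univ.filter (fun k : Fin n => m' ≤ k) := by
        simp [Fin.le_def, hm']
      rw [hs, Finset.sum_insert hnot, ih m' (by simp [hm']; omega), hD m, dif_pos h]
      ring
    · have hs : Finset.univ.filter (fun k : Fin n => m ≤ k) = {m} := by
        ext k
        simp only [Finset.mem_filter, Finset.mem_univ, true_and, Finset.mem_singleton,
          Fin.le_def, Fin.ext_iff]
        omega
      rw [hs, Finset.sum_singleton, hD, dif_neg h]

/-- The flat-configuration Hessian `H i j = β (max i j)` is congruent via a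
unimodular change of basis to the diagonal matrix with entries
`β 0 − β 1, …, β (n−2) − β (n−1), β (n−1)`, and the associated quadratic form has the
corresponding sum-of-squares expression. -/
theorem flat_hessian_diagonalization (n : ℕ) (hn : 1 ≤ n) (β : Fin n → ℝ)
    (H : Matrix (Fin n) (Fin n) ℝ) (hH : ∀ i j, H i j = β (max i j))
    (D : Fin n → ℝ)
    (hD : ∀ k : Fin n, D k = if h : (k : ℕ) + 1 < n then β k - β ⟨(k : ℕ) + 1, h⟩ else β k) :
    (∃ U : Matrix (Fin n) (Fin n) ℝ, U.det = 1 ∧ U.transpose * H * U = Matrix.diagonal D) ∧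
    (∀ x : Fin n → ℝ, x ⬝ᵥ H.mulVec x =
      ∑ k : Fin n, D k * (∑ i ∈ Finset.univ.filter (fun i : Fin n => i ≤ k), x i) ^ 2) := by
  -- S is the lower-triangular all-ones matrix
  set S : Matrix (Fin n) (Fin n) ℝ :=
    Matrix.of (fun k i : Fin n => if i ≤ k then (1 : ℝ) else 0) with hS
  -- U is the inverse of S : identity minus subdiagonal ones
  set U : Matrix (Fin n) (Fin n) ℝ :=
    Matrix.of (fun i j : Fin n =>
      (if i = j then (1 : ℝ) else 0) - (if (i : ℕ) = (j : ℕ) + 1 then (1 : ℝ) else 0)) with hU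
  -- Factorization H = Sᵀ * diag D * S
  have hfact : H = Sᵀ * Matrix.diagonal D * S := by
    ext i j
    rw [Matrix.mul_assoc]
    rw [Matrix.mul_apply]
    have : ∀ k : Fin n, Sᵀ i k * (Matrix.diagonal D * S) k j
        = if max i j ≤ k then D k else 0 := by
      intro k
      rw [Matrix.diagonal_mul]
      simp only [hS, Matrix.transpose_apply, Matrix.of_apply, max_le_iff]
      by_cases h1 : i ≤ k <;> by_cases h2 : j ≤ k <;> simp [h1, h2]
    rw [Finset.sum_congr rfl (fun k _ => this k), ← Finset.sum_filter,
      flat_tele n β D hD (max i j), hH]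
  -- S * U = 1
  have hSU : S * U = 1 := by
    ext k j
    rw [Matrix.mul_apply]
    simp only [hS, hU, Matrix.of_apply, mul_sub]
    rw [Finset.sum_sub_distrib]
    have h1 : ∑ i : Fin n, (if i ≤ k then (1:ℝ) else 0) * (if i = j then (1:ℝ) else 0)
        = if j ≤ k then 1 else 0 := by
      rw [Finset.sum_eq_single j]
      · simp
      · intro b _ hb; simp [hb]
      · simp
    have h2 : ∑ i : Fin n, (if i ≤ k then (1:ℝ) else 0) * (if (i:ℕ) = (j:ℕ) + 1 then (1:ℝ) else 0)
        = if (j:ℕ) + 1 ≤ (k:ℕ) then 1 else 0 := by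
      by_cases h : (j : ℕ) + 1 < n
      · rw [Finset.sum_eq_single (⟨(j:ℕ)+1, h⟩ : Fin n)]
        · simp [Fin.le_def]
        · intro b _ hb
          have : (b : ℕ) ≠ (j : ℕ) + 1 := by
            intro hb'; exact hb (Fin.ext hb')
          simp [this]
        · simp
      · rw [Finset.sum_eq_zero, if_neg (by omega)]
        intro i _
        have : (i : ℕ) ≠ (j : ℕ) + 1 := by omega
        simp [this]
    rw [h1, h2, Matrix.one_apply]
    rcases lt_trichotomy (j : ℕ) (k : ℕ) with h | h | h
    · rw [if_pos (by omega : j ≤ k), if_pos (by omega), if_neg (Fin.ne_of_val_ne (by omega) : ¬ k = j)]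
      ring
    · rw [if_pos (by omega : j ≤ k), if_neg (by omega), if_pos (Fin.ext h.symm)]
      ring
    · rw [if_neg (by rw [Fin.le_def]; omega : ¬ j ≤ k), if_neg (by omega),
        if_neg (Fin.ne_of_val_ne (by omega) : ¬ k = j)]
      ring
  constructor
  · refine ⟨U, ?_, ?_⟩
    · have hlt : U.det = ∏ i : Fin n, U i i :=
        Matrix.det_of_lowerTriangular U (by
          intro i j hij
          have hij' : i < j := hij
          have h1 : i ≠ j := ne_of_lt hij'
          have h2 : (i : ℕ) ≠ (j : ℕ) + 1 := by
            have := (Fin.lt_def.mp hij'); omega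
          simp only [hU, Matrix.of_apply, if_neg h1, if_neg h2, sub_zero])
      rw [hlt]
      apply Finset.prod_eq_one
      intro i _
      have h2 : (i : ℕ) ≠ (i : ℕ) + 1 := by omega
      simp only [hU, Matrix.of_apply, if_pos rfl, if_neg h2, sub_zero, if_true]
    · rw [hfact]
      calc Uᵀ * (Sᵀ * Matrix.diagonal D * S) * U
          = (S * U)ᵀ * Matrix.diagonal D * (S * U) := by
            rw [Matrix.transpose_mul]
            simp only [Matrix.mul_assoc]
        _ = Matrix.diagonal D := by rw [hSU]; simp
  · intro x
    rw [hfact, Matrix.mul_assoc, ← Matrix.mulVec_mulVec, Matrix.dotProduct_mulVec,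
      Matrix.vecMul_transpose, ← Matrix.mulVec_mulVec]
    have hy : ∀ k : Fin n, S.mulVec x k
        = ∑ i ∈ Finset.univ.filter (fun i : Fin n => i ≤ k), x i := by
      intro k
      rw [Matrix.mulVec, dotProduct]
      rw [show (∑ i : Fin n, S k i * x i) = ∑ i : Fin n, if i ≤ k then x i else 0 from
        Finset.sum_congr rfl (fun i _ => by
          by_cases h : i ≤ k <;> simp [hS, h])]
      exact (Finset.sum_filter _ _).symm
    rw [dotProduct]
    apply Finset.sum_congr rfl
    intro k _
    rw [Matrix.mulVec_diagonal, hy k]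
    ring
end

section
/- Let n ≥ 1, β : Fin n → ℝ, and let H be the symmetric matrix with H i j = β (max i j). If all the numbers β 0 − β 1, …, β (n−2) − β (n−1), β (n−1) are nonzero, then H is nondegenerate and its negative index of inertia (number of negative eigenvalues counted with multiplicity) equals the number of negative values among β 0 − β 1, …, β (n−2) − β (n−1), β (n−1). -/
/-!
Summation by parts gives `H = Lᵀ * diagonal D * L`, where `L` is the unitriangular matrix
sending a vector to its prefix sums; hence `det H = ∏ k, D k`, and the quadratic form of `H` is
`∑ k, D k * y k ^ 2` in the coordinates `y = L x`. The spectral theorem writes the same form as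
`∑ i, λ i * z i ^ 2` in orthonormal coordinates, and Sylvester's law of inertia equates the
numbers of negative coefficients: a vector whose first coordinates vanish wherever the first
coefficient is nonnegative, and whose second coordinates vanish wherever the second coefficient
is nonpositive, is zero, which bounds dimensions.
-/

open Matrix Finset

theorem card_filter_neg_le_card_filter_nonpos_of_sum_sq_eq {V ι κ : Type*} [AddCommGroup V]
    [Module ℝ V] [Fintype ι] [Fintype κ] (a : ι → ℝ) (b : κ → ℝ)
    (φ : V ≃ₗ[ℝ] (ι → ℝ)) (ψ : V →ₗ[ℝ] (κ → ℝ))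
    (h : ∀ v, ∑ i, a i * φ v i ^ 2 = ∑ j, b j * ψ v j ^ 2) :
    #{i | a i < 0} ≤ #{j | b j ≤ 0} := by
  let L : V →ₗ[ℝ] ({i // ¬ a i < 0} → ℝ) × ({j // b j ≤ 0} → ℝ) :=
    (LinearMap.funLeft ℝ ℝ Subtype.val ∘ₗ φ.toLinearMap).prod
      (LinearMap.funLeft ℝ ℝ Subtype.val ∘ₗ ψ)
  have hL : Function.Injective L := by
    refine (injective_iff_map_eq_zero L).mpr fun v hv => ?_
    have hφ : ∀ i, ¬ a i < 0 → φ v i = 0 := fun i hi => congr_fun (congr_arg Prod.fst hv) ⟨i, hi⟩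
    have hψ : ∀ j, b j ≤ 0 → ψ v j = 0 := fun j hj => congr_fun (congr_arg Prod.snd hv) ⟨j, hj⟩
    have hterm_nonpos : ∀ i ∈ univ, a i * φ v i ^ 2 ≤ 0 := fun i _ => by
      by_cases hi : a i < 0
      · exact mul_nonpos_of_nonpos_of_nonneg hi.le (sq_nonneg _)
      · simp [hφ i hi]
    have hsum_nonneg : 0 ≤ ∑ j, b j * ψ v j ^ 2 := sum_nonneg fun j _ => by
      by_cases hj : b j ≤ 0
      · simp [hψ j hj]
      · exact mul_nonneg (not_le.mp hj).le (sq_nonneg _)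
    have hsum_zero : ∑ i, a i * φ v i ^ 2 = 0 :=
      le_antisymm (sum_nonpos hterm_nonpos) (h v ▸ hsum_nonneg)
    refine φ.map_eq_zero_iff.mp (funext fun i => ?_)
    by_cases hi : a i < 0
    · have := (sum_eq_zero_iff_of_nonpos hterm_nonpos).mp hsum_zero i (mem_univ i)
      simpa [hi.ne] using this
    · exact hφ i hi
  have hrank := LinearMap.finrank_le_finrank_of_injective hL
  simp only [φ.finrank_eq, Module.finrank_prod, Module.finrank_fintype_fun_eq_card,
    Fintype.card_subtype] at hrank
  have hsplit := card_filter_add_card_filter_not (s := univ) fun i => a i < 0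
  rw [card_univ] at hsplit
  omega

theorem dotProduct_mulVec_transpose_mul_diagonal_mul {ι κ R : Type*} [Fintype ι] [Fintype κ]
    [DecidableEq κ] [CommRing R] (P : Matrix κ ι R) (d : κ → R) (x : ι → R) :
    x ⬝ᵥ (Pᵀ * diagonal d * P) *ᵥ x = ∑ k, d k * (P *ᵥ x) k ^ 2 := by
  rw [← mulVec_mulVec, ← mulVec_mulVec, dotProduct_mulVec, vecMul_transpose]
  simp only [dotProduct, mulVec_diagonal]
  exact sum_congr rfl fun k _ => by ring

theorem card_filter_neg_le_of_transpose_mul_diagonal_mul_eq {ι κ : Type*} [Fintype ι]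
    [Fintype κ] [DecidableEq ι] [DecidableEq κ] {a : ι → ℝ} {b : κ → ℝ} (hb : ∀ j, b j ≠ 0)
    {P : Matrix ι ι ℝ} (hP : IsUnit P.det) (Q : Matrix κ ι ℝ)
    (h : Pᵀ * diagonal a * P = Qᵀ * diagonal b * Q) :
    #{i | a i < 0} ≤ #{j | b j < 0} := by
  have hle := card_filter_neg_le_card_filter_nonpos_of_sum_sq_eq a b
    (P.toLinearEquiv' (P.invertibleOfIsUnitDet hP)) Q.mulVecLin fun v => by
      have hv := congr_arg (fun M => v ⬝ᵥ M *ᵥ v) h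
      simp only [dotProduct_mulVec_transpose_mul_diagonal_mul] at hv
      exact hv
  simpa only [(hb _).le_iff_lt] using hle

theorem Matrix.IsHermitian.exists_isUnit_det_eq_transpose_mul_diagonal_eigenvalues_mul
    {ι : Type*} [Fintype ι] [DecidableEq ι] {A : Matrix ι ι ℝ} (hA : A.IsHermitian) :
    ∃ P : Matrix ι ι ℝ, IsUnit P.det ∧ A = Pᵀ * diagonal hA.eigenvalues * P := by
  refine ⟨_, UnitaryGroup.det_isUnit (star hA.eigenvectorUnitary), ?_⟩
  conv_lhs => rw [hA.spectral_theorem]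
  simp [star_eq_conjTranspose, conjTranspose_eq_transpose_of_trivial]

section PrefixSum

variable (ι R : Type*) [Fintype ι] [LinearOrder ι] [CommRing R]

def prefixSumMatrix : Matrix ι ι R := of fun k i => if i ≤ k then 1 else 0

theorem det_prefixSumMatrix : (prefixSumMatrix ι R).det = 1 := by
  rw [det_of_isLowerTriangular _ fun k i (h : k < i) => by simp [prefixSumMatrix, h.not_ge]]
  simp [prefixSumMatrix]

variable {ι R}

theorem transpose_prefixSumMatrix_mul_diagonal_mul (d : ι → R) :
    (prefixSumMatrix ι R)ᵀ * diagonal d * prefixSumMatrix ι R =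
      of fun i j => ∑ k with max i j ≤ k, d k := by
  ext i j
  rw [mul_apply]
  simp [prefixSumMatrix, mul_diagonal, sum_filter, ← ite_and, and_comm]

end PrefixSum

theorem sum_filter_le_eq_of_eq_sub_succ {n : ℕ} (β D : Fin n → ℝ)
    (hD : ∀ k : Fin n, D k = if h : (k : ℕ) + 1 < n then β k - β ⟨(k : ℕ) + 1, h⟩ else β k)
    (m : Fin n) : ∑ k with m ≤ k, D k = β m := by
  let g : ℕ → ℝ := fun k => if h : k < n then β ⟨k, h⟩ else 0
  have hDg : ∀ k : Fin n, D k = g k - g (k + 1) := fun k => by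
    by_cases h : (k : ℕ) + 1 < n <;> simp [hD, g, h]
  calc ∑ k with m ≤ k, D k = ∑ k ∈ (Ici m).map Fin.valEmbedding, (g k - g (k + 1)) := by
        rw [filter_le_eq_Ici, sum_map]; exact sum_congr rfl fun k _ => hDg k
    _ = -∑ k ∈ Ico (m : ℕ) n, (g (k + 1) - g k) := by
        rw [Fin.map_valEmbedding_Ici, ← sum_neg_distrib]; simp
    _ = β m := by simp [sum_Ico_sub g m.isLt.le, g]

theorem flat_hessian_index_general (n : ℕ) (β : Fin n → ℝ)
    (H : Matrix (Fin n) (Fin n) ℝ) (hH : ∀ i j, H i j = β (max i j))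
    (hsym : H.IsHermitian)
    (D : Fin n → ℝ)
    (hD : ∀ k : Fin n, D k = if h : (k : ℕ) + 1 < n then β k - β ⟨(k : ℕ) + 1, h⟩ else β k)
    (hne : ∀ k, D k ≠ 0) :
    H.det ≠ 0 ∧
    (Finset.univ.filter fun i : Fin n => hsym.eigenvalues i < 0).card =
      (Finset.univ.filter fun k : Fin n => D k < 0).card := by
  set L := prefixSumMatrix (Fin n) ℝ
  have hfac : H = Lᵀ * diagonal D * L := by
    ext i j
    rw [transpose_prefixSumMatrix_mul_diagonal_mul, of_apply, hH,
      sum_filter_le_eq_of_eq_sub_succ β D hD]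
  have hdet : H.det ≠ 0 := by
    rw [hfac, det_mul, det_mul, det_transpose, det_prefixSumMatrix, det_diagonal, one_mul, mul_one]
    exact prod_ne_zero_iff.mpr fun k _ => hne k
  have heig : ∀ i, hsym.eigenvalues i ≠ 0 := fun i hi => hdet <| by
    rw [hsym.det_eq_prod_eigenvalues]
    exact prod_eq_zero (mem_univ i) (by simp [hi])
  obtain ⟨P, hP, hspec⟩ := hsym.exists_isUnit_det_eq_transpose_mul_diagonal_eigenvalues_mul
  have hL : IsUnit L.det := by rw [det_prefixSumMatrix]; exact isUnit_one
  exact ⟨hdet, le_antisymm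
    (card_filter_neg_le_of_transpose_mul_diagonal_mul_eq hne hP L (hspec.symm.trans hfac))
    (card_filter_neg_le_of_transpose_mul_diagonal_mul_eq heig hL P (hfac.symm.trans hspec))⟩

/-- If the quantities `β 0 − β 1, …, β (n−2) − β (n−1), β (n−1)` are all nonzero,
then the matrix `H i j = β (max i j)` is nondegenerate and its negative index of inertia
(number of negative eigenvalues, with multiplicity) equals the number of negative values
among those quantities. -/
theorem flat_hessian_index (n : ℕ) (hn : 1 ≤ n) (β : Fin n → ℝ)
    (H : Matrix (Fin n) (Fin n) ℝ) (hH : ∀ i j, H i j = β (max i j))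
    (hsym : H.IsHermitian)
    (D : Fin n → ℝ)
    (hD : ∀ k : Fin n, D k = if h : (k : ℕ) + 1 < n then β k - β ⟨(k : ℕ) + 1, h⟩ else β k)
    (hne : ∀ k, D k ≠ 0) :
    H.det ≠ 0 ∧
    (Finset.univ.filter fun i : Fin n => hsym.eigenvalues i < 0).card =
      (Finset.univ.filter fun k : Fin n => D k < 0).card :=
  flat_hessian_index_general n β H hH hsym D hD hne
end

section
/- Let a : Fin n → ℝ be nonzero reals (n ≥ 1) and set β k = 1 − 1/(a k). Then all of the numbers β 0 − β 1, β 1 − β 2, …, β (n−2) − β (n−1), β (n−1) are negative if and only if 0 < a 0 < a 1 < ⋯ < a (n−1) < 1. Equivalently (by the congruence to a diagonal matrix), the symmetric matrix H i j = β (max i j) is negative definite if and only if 0 < a 0 < ⋯ < a (n−1) < 1. -/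
open Matrix

private lemma tele_sum (f : ℕ → ℝ) (i j : ℕ) (h : i ≤ j) :
    ∑ m ∈ Finset.Ico i j, (f m - f (m + 1)) = f i - f j := by
  induction j, h using Nat.le_induction with
  | base => simp
  | succ j hj ih => rw [Finset.sum_Ico_succ_top (by omega), ih]; ring

/-- With `β k = 1 − 1/(a k)`, the quantities
`β 0 − β 1, …, β (n−2) − β (n−1), β (n−1)` are all negative iff
`0 < a 0 < a 1 < ⋯ < a (n−1) < 1`; equivalently, the matrix `H i j = β (max i j)`
is negative definite iff `0 < a 0 < ⋯ < a (n−1) < 1`. -/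
theorem flat_maximum_criterion (n : ℕ) (hn : 1 ≤ n) (a : Fin n → ℝ) (ha : ∀ k, a k ≠ 0)
    (β : Fin n → ℝ) (hβ : ∀ k, β k = 1 - 1 / a k)
    (D : Fin n → ℝ)
    (hD : ∀ k : Fin n, D k = if h : (k : ℕ) + 1 < n then β k - β ⟨(k : ℕ) + 1, h⟩ else β k)
    (H : Matrix (Fin n) (Fin n) ℝ) (hH : ∀ i j, H i j = β (max i j)) :
    ((∀ k, D k < 0) ↔
      (0 < a ⟨0, hn⟩ ∧ StrictMono a ∧ a ⟨n - 1, by omega⟩ < 1)) ∧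
    ((∀ x : Fin n → ℝ, x ≠ 0 → x ⬝ᵥ H.mulVec x < 0) ↔
      (0 < a ⟨0, hn⟩ ∧ StrictMono a ∧ a ⟨n - 1, by omega⟩ < 1)) := by
  -- `β k < 0` iff `0 < a k < 1`
  have key : ∀ k : Fin n, β k < 0 → 0 < a k ∧ a k < 1 := by
    intro k hk
    rw [hβ] at hk
    have h1 : 1 < 1 / a k := by linarith
    have hpos : 0 < a k := by
      by_contra h
      push_neg at h
      have h2 : a k < 0 := lt_of_le_of_ne h (ha k)
      have : 1 / a k < 0 := div_neg_of_pos_of_neg one_pos h2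
      linarith
    refine ⟨hpos, ?_⟩
    rw [lt_div_iff₀ hpos] at h1
    linarith
  have key' : ∀ k : Fin n, 0 < a k → a k < 1 → β k < 0 := by
    intro k hpos h1
    rw [hβ]
    have : 1 < 1 / a k := by rw [lt_div_iff₀ hpos]; linarith
    linarith
  -- Part 1
  have hP1 : (∀ k, D k < 0) ↔
      (0 < a ⟨0, hn⟩ ∧ StrictMono a ∧ a ⟨n - 1, by omega⟩ < 1) := by
    constructor
    · intro hDneg
      have hlast : β ⟨n - 1, by omega⟩ < 0 := by
        have h := hDneg ⟨n - 1, by omega⟩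
        rw [hD] at h
        rwa [dif_neg (by simp; omega)] at h
      have hstep : ∀ k : Fin n, ∀ h : (k : ℕ) + 1 < n,
          0 < a ⟨(k : ℕ) + 1, h⟩ → 0 < a k ∧ a k < a ⟨(k : ℕ) + 1, h⟩ := by
        intro k h hpos'
        have hk := hDneg k
        rw [hD, dif_pos h] at hk
        rw [hβ, hβ] at hk
        have h2 : 1 / a ⟨(k : ℕ) + 1, h⟩ < 1 / a k := by linarith
        have h3 : 0 < 1 / a ⟨(k : ℕ) + 1, h⟩ := one_div_pos.mpr hpos'
        have hpos : 0 < a k := one_div_pos.mp (lt_trans h3 h2)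
        exact ⟨hpos, lt_of_one_div_lt_one_div hpos' h2⟩
      -- all `a k` are positive, by downward induction
      have hall : ∀ m : ℕ, ∀ k : Fin n, (k : ℕ) + m + 1 = n → 0 < a k := by
        intro m
        induction m with
        | zero =>
          intro k hk
          have hkeq : k = ⟨n - 1, by omega⟩ := Fin.ext (by simp; omega)
          rw [hkeq]
          exact (key _ hlast).1
        | succ m ih =>
          intro k hk
          have h1 : (k : ℕ) + 1 < n := by omega
          have h2 : 0 < a ⟨(k : ℕ) + 1, h1⟩ := ih ⟨(k : ℕ) + 1, h1⟩ (by simp; omega)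
          exact (hstep k h1 h2).1
      have hposall : ∀ k : Fin n, 0 < a k := fun k => hall (n - 1 - (k : ℕ)) k (by omega)
      refine ⟨hposall _, ?_, (key _ hlast).2⟩
      -- strict monotonicity
      obtain ⟨N, rfl⟩ : ∃ N, n = N + 1 := ⟨n - 1, by omega⟩
      rw [Fin.strictMono_iff_lt_succ]
      intro i
      have h1 : ((i.castSucc : Fin (N + 1)) : ℕ) + 1 < N + 1 := by simp
      have h2 := (hstep i.castSucc h1 (hposall _)).2
      have h3 : (⟨((i.castSucc : Fin (N + 1)) : ℕ) + 1, h1⟩ : Fin (N + 1)) = i.succ := by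
        rw [Fin.ext_iff]; simp
      rwa [h3] at h2
    · rintro ⟨h0, hmono, h1⟩
      have hposall : ∀ k : Fin n, 0 < a k := by
        intro k
        rcases eq_or_lt_of_le (show (⟨0, hn⟩ : Fin n) ≤ k from by simp [Fin.le_def]) with h | h
        · rwa [← h]
        · exact lt_trans h0 (hmono h)
      have hltall : ∀ k : Fin n, a k < 1 := by
        intro k
        rcases eq_or_lt_of_le (show k ≤ (⟨n - 1, by omega⟩ : Fin n) from by
          rw [Fin.le_def]; simp; omega) with h | h
        · rwa [h]
        · exact lt_trans (hmono h) h1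
      intro k
      rw [hD]
      split
      · rename_i h
        have hlt : a k < a ⟨(k : ℕ) + 1, h⟩ := hmono (by rw [Fin.lt_def]; simp)
        have hp := hposall k
        have hp' := hposall ⟨(k : ℕ) + 1, h⟩
        have : 1 / a ⟨(k : ℕ) + 1, h⟩ < 1 / a k := one_div_lt_one_div_of_lt hp hlt
        rw [hβ, hβ]
        linarith
      · exact key' k (hposall k) (hltall k)
  refine ⟨hP1, ?_⟩
  rw [← hP1]
  -- the partial-sum change of variables
  set S : (Fin n → ℝ) → Fin n → ℝ :=
    fun x m => ∑ i : Fin n, if i ≤ m then x i else 0 with hSdef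
  -- telescoping: β k = ∑_{m ≥ k} D m
  have htele : ∀ k : Fin n, β k = ∑ m : Fin n, if k ≤ m then D m else 0 := by
    intro k
    set γ : ℕ → ℝ := fun m => if h : m < n then β ⟨m, h⟩ else 0 with hγ
    have hDγ : ∀ m : Fin n, D m = γ (m : ℕ) - γ ((m : ℕ) + 1) := by
      intro m
      rw [hD]
      by_cases h : (m : ℕ) + 1 < n
      · rw [dif_pos h]
        simp only [hγ]
        rw [dif_pos m.isLt, dif_pos h, Fin.eta]
      · rw [dif_neg h]
        simp only [hγ]
        rw [dif_pos m.isLt, dif_neg h, Fin.eta]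
        ring
    symm
    calc ∑ m : Fin n, (if k ≤ m then D m else 0)
        = ∑ m : Fin n, (if (k : ℕ) ≤ (m : ℕ) then γ (m : ℕ) - γ ((m : ℕ) + 1) else 0) := by
          refine Finset.sum_congr rfl fun m _ => ?_
          rw [hDγ]
          by_cases h : (k : ℕ) ≤ (m : ℕ)
          · rw [if_pos (Fin.le_def.mpr h), if_pos h]
          · rw [if_neg (fun hh => h (Fin.le_def.mp hh)), if_neg h]
      _ = ∑ m ∈ Finset.range n, (if (k : ℕ) ≤ m then γ m - γ (m + 1) else 0) :=
          Fin.sum_univ_eq_sum_range (fun m => if (k : ℕ) ≤ m then γ m - γ (m + 1) else 0) n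
      _ = ∑ m ∈ Finset.Ico (k : ℕ) n, (γ m - γ (m + 1)) := by
          rw [← Finset.sum_filter]
          congr 1
          ext m
          simp only [Finset.mem_filter, Finset.mem_range, Finset.mem_Ico]
          tauto
      _ = γ (k : ℕ) - γ n := tele_sum γ (k : ℕ) n (le_of_lt k.isLt)
      _ = β k := by
          simp only [hγ]
          rw [dif_pos k.isLt, dif_neg (lt_irrefl n), Fin.eta]
          ring
  -- the quadratic form identity
  have hQF : ∀ x : Fin n → ℝ, x ⬝ᵥ H.mulVec x = ∑ m : Fin n, D m * (S x m) ^ 2 := by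
    intro x
    calc x ⬝ᵥ H.mulVec x
        = ∑ i : Fin n, ∑ j : Fin n, x i * (β (max i j) * x j) := by
          simp [dotProduct, mulVec, hH, Finset.mul_sum]
      _ = ∑ i : Fin n, ∑ j : Fin n, ∑ m : Fin n,
            (if max i j ≤ m then x i * (D m * x j) else 0) := by
          refine Finset.sum_congr rfl fun i _ => Finset.sum_congr rfl fun j _ => ?_
          rw [htele (max i j), Finset.sum_mul, Finset.mul_sum]
          refine Finset.sum_congr rfl fun m _ => ?_
          by_cases h : max i j ≤ m <;> simp [h]
      _ = ∑ i : Fin n, ∑ m : Fin n, ∑ j : Fin n,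
            (if max i j ≤ m then x i * (D m * x j) else 0) :=
          Finset.sum_congr rfl fun i _ => Finset.sum_comm
      _ = ∑ m : Fin n, ∑ i : Fin n, ∑ j : Fin n,
            (if max i j ≤ m then x i * (D m * x j) else 0) := Finset.sum_comm
      _ = ∑ m : Fin n, D m *
            ((∑ i : Fin n, if i ≤ m then x i else 0) * (∑ j : Fin n, if j ≤ m then x j else 0)) := by
          refine Finset.sum_congr rfl fun m _ => ?_
          rw [Finset.sum_mul_sum, Finset.mul_sum]
          refine Finset.sum_congr rfl fun i _ => ?_
          rw [Finset.mul_sum]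
          refine Finset.sum_congr rfl fun j _ => ?_
          by_cases hi : i ≤ m <;> by_cases hj : j ≤ m <;>
            simp [hi, hj, max_le_iff] <;> ring
      _ = ∑ m : Fin n, D m * (S x m) ^ 2 := by
          refine Finset.sum_congr rfl fun m _ => ?_
          simp only [hSdef]
          ring
  -- if all partial sums vanish, the vector vanishes
  have hS0 : ∀ x : Fin n → ℝ, (∀ m, S x m = 0) → x = 0 := by
    intro x hx
    have main : ∀ t : ℕ, ∀ k : Fin n, (k : ℕ) = t → x k = 0 := by
      intro t
      induction t using Nat.strong_induction_on with
      | _ t ih =>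
        intro k hk
        have h2 : ∑ i ∈ Finset.univ.erase k, (if i ≤ k then x i else 0) = 0 := by
          refine Finset.sum_eq_zero fun i hi => ?_
          by_cases hik : i ≤ k
          · have hne : i ≠ k := Finset.ne_of_mem_erase hi
            have hlt : (i : ℕ) < t := by
              rw [← hk]
              exact lt_of_le_of_ne hik (fun h => hne (Fin.ext h))
            rw [if_pos hik, ih _ hlt i rfl]
          · rw [if_neg hik]
        have hsum := hx k
        simp only [hSdef] at hsum
        rw [← Finset.sum_erase_add _ _ (Finset.mem_univ k), h2, zero_add,
          if_pos le_rfl] at hsum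
        exact hsum
    funext k
    exact main (k : ℕ) k rfl
  constructor
  · -- negative definite → all D k < 0
    intro hQ k
    set x : Fin n → ℝ :=
      fun i => (if i = k then (1 : ℝ) else 0) - (if (i : ℕ) = (k : ℕ) + 1 then 1 else 0)
      with hxdef
    have hxk : x k = 1 := by
      have hne : ¬((k : ℕ) = (k : ℕ) + 1) := by omega
      simp [hxdef, hne]
    have hxne : x ≠ 0 := by
      intro h
      have := congrFun h k
      rw [hxk] at this
      simp at this
    have hSx : ∀ m : Fin n, S x m = if m = k then 1 else 0 := by
      intro m
      simp only [hSdef]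
      have e1 : ∑ i : Fin n, (if i ≤ m then x i else 0)
          = (∑ i : Fin n, if i ≤ m then (if i = k then (1 : ℝ) else 0) else 0)
            - (∑ i : Fin n, if i ≤ m then (if (i : ℕ) = (k : ℕ) + 1 then (1 : ℝ) else 0) else 0) := by
        rw [← Finset.sum_sub_distrib]
        refine Finset.sum_congr rfl fun i _ => ?_
        by_cases h : i ≤ m <;> simp [h, hxdef]
      have e2 : (∑ i : Fin n, if i ≤ m then (if i = k then (1 : ℝ) else 0) else 0)
          = if k ≤ m then 1 else 0 := by
        calc (∑ i : Fin n, if i ≤ m then (if i = k then (1 : ℝ) else 0) else 0)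
            = ∑ i : Fin n, (if i = k then (if i ≤ m then (1 : ℝ) else 0) else 0) := by
              refine Finset.sum_congr rfl fun i _ => ?_
              by_cases h1 : i = k <;> by_cases h2 : i ≤ m <;> simp [h1, h2]
          _ = if k ≤ m then 1 else 0 := by rw [Finset.sum_ite_eq']; simp
      have e3 : (∑ i : Fin n, if i ≤ m then (if (i : ℕ) = (k : ℕ) + 1 then (1 : ℝ) else 0) else 0)
          = if (k : ℕ) + 1 ≤ (m : ℕ) then 1 else 0 := by
        by_cases hkn : (k : ℕ) + 1 < n
        · calc (∑ i : Fin n, if i ≤ m then (if (i : ℕ) = (k : ℕ) + 1 then (1 : ℝ) else 0) else 0)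
              = ∑ i : Fin n, (if i = (⟨(k : ℕ) + 1, hkn⟩ : Fin n)
                  then (if i ≤ m then (1 : ℝ) else 0) else 0) := by
                refine Finset.sum_congr rfl fun i _ => ?_
                have : ((i : ℕ) = (k : ℕ) + 1) ↔ (i = (⟨(k : ℕ) + 1, hkn⟩ : Fin n)) := by
                  rw [Fin.ext_iff]
                by_cases h1 : (i : ℕ) = (k : ℕ) + 1 <;>
                  by_cases h2 : i ≤ m <;> simp [h1, h2, ← this]
            _ = if (⟨(k : ℕ) + 1, hkn⟩ : Fin n) ≤ m then 1 else 0 := by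
                rw [Finset.sum_ite_eq']; simp
            _ = if (k : ℕ) + 1 ≤ (m : ℕ) then 1 else 0 := by
                congr 1
        · rw [if_neg (by have := m.isLt; omega)]
          refine Finset.sum_eq_zero fun i _ => ?_
          have : (i : ℕ) ≠ (k : ℕ) + 1 := by have := i.isLt; omega
          simp [this]
      rw [e1, e2, e3]
      by_cases h : m = k
      · subst h
        rw [if_pos le_rfl, if_neg (by omega), if_pos rfl]
        ring
      · rw [if_neg h]
        by_cases h2 : k ≤ m
        · have hkm : (k : ℕ) ≤ (m : ℕ) := h2
          have hne : (k : ℕ) ≠ (m : ℕ) := fun he => h (Fin.ext he.symm)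
          rw [if_pos h2, if_pos (by omega)]
          ring
        · have hkm : ¬ (k : ℕ) ≤ (m : ℕ) := h2
          rw [if_neg h2, if_neg (by omega)]
          ring
    have hQx := hQ x hxne
    rw [hQF] at hQx
    have heval : ∑ m : Fin n, D m * (S x m) ^ 2 = D k := by
      calc ∑ m : Fin n, D m * (S x m) ^ 2
          = ∑ m : Fin n, (if m = k then D m else 0) := by
            refine Finset.sum_congr rfl fun m _ => ?_
            rw [hSx]
            by_cases h : m = k <;> simp [h]
        _ = D k := by rw [Finset.sum_ite_eq']; simp
    rwa [heval] at hQx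
  · -- all D k < 0 → negative definite
    intro hneg x hx
    rw [hQF]
    obtain ⟨m0, hm0⟩ : ∃ m, S x m ≠ 0 := by
      by_contra h
      push_neg at h
      exact hx (hS0 x h)
    have hle : ∀ m ∈ Finset.univ, D m * (S x m) ^ 2 ≤ (fun _ : Fin n => (0 : ℝ)) m :=
      fun m _ => mul_nonpos_iff.mpr (Or.inr ⟨le_of_lt (hneg m), sq_nonneg _⟩)
    have hsq : 0 < (S x m0) ^ 2 :=
      lt_of_le_of_ne (sq_nonneg _) (Ne.symm (pow_ne_zero 2 hm0))
    have hlt : D m0 * (S x m0) ^ 2 < (fun _ : Fin n => (0 : ℝ)) m0 :=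
      mul_neg_of_neg_of_pos (hneg m0) hsq
    calc ∑ m : Fin n, D m * (S x m) ^ 2
        < ∑ _m : Fin n, (0 : ℝ) :=
          Finset.sum_lt_sum hle ⟨m0, Finset.mem_univ m0, hlt⟩
      _ = 0 := Finset.sum_const_zero
end

section
/- Let A ⊆ ℝ^d be a nonempty closed affine subspace and p, q ∈ ℝ^d. If a ∈ A minimizes the function a ↦ ‖p − a‖ + ‖q − a‖ over A, and p ∉ A, q ∉ A, then ‖p − a‖ + ‖q − a‖ = ‖p' − q‖ where p' is any point satisfying: ‖p' − b‖ = ‖p − b‖ for all b ∈ A (p' is obtained from p by an isometry fixing A pointwise) and p', a, q are collinear with a between p' and q. Equivalently, there exists an isometry R of ℝ^d fixing A pointwise such that ‖p − a‖ + ‖q − a‖ = ‖R p − q‖ and a lies on the segment [R p, q]. -/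
/-!
At a minimiser `a`, the derivative of `b ↦ ‖p - b‖ + ‖q - b‖` along `A` vanishes, i.e. the sum
of the unit vectors from `a` towards `p` and towards `q` is orthogonal to `A`. The reflection
across the hyperplane through `a` orthogonal to that sum therefore fixes `A`, and it maps the unit
vector towards `p` to the opposite of the unit vector towards `q`: it sends `p` onto the ray from
`q` through `a`, at distance `‖p - a‖` beyond `a`.
-/

open RealInnerProductSpace

variable {V : Type*} [NormedAddCommGroup V] [InnerProductSpace ℝ V]

theorem hasDerivAt_norm_sub_smul {u : V} (hu : u ≠ 0) (z : V) :
    HasDerivAt (fun t : ℝ => ‖u - t • z‖) (-⟪u, z⟫ / ‖u‖) 0 := by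
  have hline : HasDerivAt (fun t : ℝ => u - t • z) (-z) 0 := by
    simpa using ((hasDerivAt_id (0 : ℝ)).smul_const z).const_sub u
  have hsq := hline.norm_sq.sqrt (by simpa using hu)
  simp only [Real.sqrt_sq (norm_nonneg _)] at hsq
  convert hsq using 1
  simp only [zero_smul, sub_zero, inner_neg_right]
  field_simp

theorem inner_normalize_add_normalize_eq_zero {u v z : V} (hu : u ≠ 0) (hv : v ≠ 0)
    (hmin : ∀ t : ℝ, ‖u‖ + ‖v‖ ≤ ‖u - t • z‖ + ‖v - t • z‖) :
    ⟪‖u‖⁻¹ • u + ‖v‖⁻¹ • v, z⟫ = 0 := by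
  have hlocal : IsLocalMin (fun t : ℝ => ‖u - t • z‖ + ‖v - t • z‖) 0 :=
    Filter.Eventually.of_forall fun t => by simpa using hmin t
  have hderiv := hlocal.hasDerivAt_eq_zero
    ((hasDerivAt_norm_sub_smul hu z).add (hasDerivAt_norm_sub_smul hv z))
  rw [inner_add_left, real_inner_smul_left, real_inner_smul_left]
  linear_combination (-1 : ℝ) * hderiv

theorem exists_linearIsometryEquiv_sameRay_neg {u v : V} (hu : u ≠ 0) (hv : v ≠ 0) :
    ∃ F : V ≃ₗᵢ[ℝ] V,
      (∀ z, ⟪‖u‖⁻¹ • u + ‖v‖⁻¹ • v, z⟫ = 0 → F z = z) ∧ SameRay ℝ (-F u) v := by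
  have hF : (ℝ ∙ (‖u‖⁻¹ • u - -(‖v‖⁻¹ • v)))ᗮ.reflection (‖u‖⁻¹ • u) = -(‖v‖⁻¹ • v) :=
    Submodule.reflection_sub <| by simp [norm_smul, hu, hv]
  rw [sub_neg_eq_add] at hF
  let F := (ℝ ∙ (‖u‖⁻¹ • u + ‖v‖⁻¹ • v))ᗮ.reflection
  have hFu : F u = ‖u‖ • F (‖u‖⁻¹ • u) := by
    rw [← LinearIsometryEquiv.map_smul, smul_inv_smul₀ (norm_ne_zero_iff.2 hu)]
  refine ⟨F, fun z hz => ?_, ?_⟩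
  · exact Submodule.reflection_mem_subspace_eq_self
      (Submodule.mem_orthogonal_singleton_iff_inner_right.2 hz)
  · rw [hFu, hF, smul_neg, neg_neg, smul_smul]
    exact SameRay.sameRay_nonneg_smul_left v (by positivity)

theorem single_hinge_straightening_general (d : ℕ)
    (A : AffineSubspace ℝ (EuclideanSpace ℝ (Fin d)))
    (p q a : EuclideanSpace ℝ (Fin d))
    (hp : p ∉ A) (hq : q ∉ A) (ha : a ∈ A)
    (hmin : ∀ b ∈ A, ‖p - a‖ + ‖q - a‖ ≤ ‖p - b‖ + ‖q - b‖) :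
    ∃ R : EuclideanSpace ℝ (Fin d) ≃ᵢ EuclideanSpace ℝ (Fin d),
      (∀ b ∈ A, R b = b) ∧
      ‖p - a‖ + ‖q - a‖ = ‖R p - q‖ ∧
      a ∈ segment ℝ (R p) q := by
  have hu : p - a ≠ 0 := sub_ne_zero.2 fun h => hp (h ▸ ha)
  have hv : q - a ≠ 0 := sub_ne_zero.2 fun h => hq (h ▸ ha)
  have hbalance : ∀ z ∈ A.direction,
      ⟪‖p - a‖⁻¹ • (p - a) + ‖q - a‖⁻¹ • (q - a), z⟫ = 0 := fun z hz =>
    inner_normalize_add_normalize_eq_zero hu hv fun t => by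
      simpa [sub_sub, add_comm] using
        hmin _ (AffineSubspace.vadd_mem_of_mem_direction (A.direction.smul_mem t hz) ha)
  obtain ⟨F, hfix, hray⟩ := exists_linearIsometryEquiv_sameRay_neg hu hv
  let R := (IsometryEquiv.subRight a).trans (F.toIsometryEquiv.trans (IsometryEquiv.addRight a))
  have hR : ∀ x, R x = F (x - a) + a := fun _ => rfl
  have hRp : a - R p = -F (p - a) := by rw [hR]; abel
  rw [← hRp] at hray
  refine ⟨R, fun b hb => ?_, ?_, mem_segment_iff_sameRay.2 hray⟩
  · have hba : b - a ∈ A.direction := AffineSubspace.vsub_mem_direction hb ha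
    rw [hR, hfix _ (hbalance _ hba), sub_add_cancel]
  · calc ‖p - a‖ + ‖q - a‖ = ‖a - R p‖ + ‖q - a‖ := by rw [hRp, norm_neg, F.norm_map]
      _ = ‖(a - R p) + (q - a)‖ := hray.norm_add.symm
      _ = ‖R p - q‖ := by rw [← norm_neg]; congr 1; abel

/-- If `a ∈ A` minimizes `‖p − a‖ + ‖q − a‖` over a nonempty closed affine
subspace `A`, with `p ∉ A` and `q ∉ A`, then there is an isometry `R` of the ambient space
fixing `A` pointwise such that `‖p − a‖ + ‖q − a‖ = ‖R p − q‖` and `a` lies on the segment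
`[R p, q]`. -/
theorem single_hinge_straightening (d : ℕ)
    (A : AffineSubspace ℝ (EuclideanSpace ℝ (Fin d)))
    (hne : (A : Set (EuclideanSpace ℝ (Fin d))).Nonempty)
    (hcl : IsClosed (A : Set (EuclideanSpace ℝ (Fin d))))
    (p q a : EuclideanSpace ℝ (Fin d))
    (hp : p ∉ A) (hq : q ∉ A) (ha : a ∈ A)
    (hmin : ∀ b ∈ A, ‖p - a‖ + ‖q - a‖ ≤ ‖p - b‖ + ‖q - b‖) :
    ∃ R : EuclideanSpace ℝ (Fin d) ≃ᵢ EuclideanSpace ℝ (Fin d),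
      (∀ b ∈ A, R b = b) ∧
      ‖p - a‖ + ‖q - a‖ = ‖R p - q‖ ∧
      a ∈ segment ℝ (R p) q :=
  single_hinge_straightening_general d A p q a hp hq ha hmin
end

section
/- For n ≥ 1 and d ≥ 1, consider the square-free polynomial ring ℝ[h_1,…,h_n]/(h_1², …, h_n²). The coefficient of the monomial h_1 h_2 ⋯ h_n in the product (h_1 + h_2 + ⋯ + h_n) · ∏_{i=2}^{n} ( d·(h_1 + ⋯ + h_{i−1}) + h_i + ⋯ + h_n ) equals Σ_{k=0}^{n−1} A(n,k) d^k, where A(n,k) are the Eulerian numbers (the number of permutations of {1,…,n} with exactly k descents). -/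
open Finset Equiv MvPolynomial

/-- Eulerian numbers `A(n,k)`: the number of permutations of `{1,…,n}` with exactly `k`
descents, via the recurrence `A(n,k) = (k+1)A(n−1,k) + (n−k)A(n−1,k−1)`, `A(0,0) = 1`. -/
def eulerian : ℕ → ℕ → ℕ
  | 0, 0 => 1
  | 0, _ + 1 => 0
  | n + 1, 0 => eulerian n 0
  | n + 1, k + 1 => (k + 2) * eulerian n (k + 1) + (n + 1 - (k + 1)) * eulerian n k

/-- number of deficiencies of a permutation -/
def defi {n : ℕ} (σ : Equiv.Perm (Fin n)) : ℕ :=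
  (Finset.univ.filter fun i => σ i < i).card

lemma defi_zero {n : ℕ} (e : Perm (Fin n)) :
    defi (Equiv.Perm.decomposeFin.symm (0, e)) = defi e := by
  simp only [defi, card_filter]
  rw [Fin.sum_univ_succ]
  simp [Equiv.Perm.decomposeFin_symm_apply_zero, Equiv.Perm.decomposeFin_symm_apply_succ,
    Fin.succ_lt_succ_iff]

lemma defi_succ {n : ℕ} (e : Perm (Fin n)) (j : Fin n) :
    defi (Equiv.Perm.decomposeFin.symm (j.succ, e)) = defi e + (if j < e.symm j then 0 else 1) := by
  simp only [defi, card_filter]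
  rw [Fin.sum_univ_succ]
  have h0 : ¬ (Equiv.Perm.decomposeFin.symm (j.succ, e)) 0 < 0 := by
    exact Fin.not_lt_zero _
  rw [if_neg h0, zero_add]
  have key : ∀ x : Fin n,
      (if (Equiv.Perm.decomposeFin.symm (j.succ, e)) x.succ < x.succ then 1 else 0) =
      (if e x < x then 1 else 0) + (if x = e.symm j ∧ ¬ e x < x then 1 else 0) := by
    intro x
    rw [Equiv.Perm.decomposeFin_symm_apply_succ]
    by_cases hx : e x = j
    · have hx' : x = e.symm j := by rw [← hx]; simp
      subst hx'
      rw [hx, Equiv.swap_apply_right]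
      rw [if_pos (Fin.succ_pos _)]
      by_cases hlt : j < e.symm j
      · simp [hx, hlt]
      · simp [hx, hlt]
    · have h1 : (e x).succ ≠ 0 := Fin.succ_ne_zero _
      have h2 : (e x).succ ≠ j.succ := by
        simpa [Fin.succ_inj] using hx
      rw [Equiv.swap_apply_of_ne_of_ne h1 h2]
      simp only [Fin.succ_lt_succ_iff]
      have hx' : ¬ x = e.symm j := by
        intro h; apply hx; rw [h]; simp
      simp [hx']
  rw [Finset.sum_congr rfl (fun x _ => key x), Finset.sum_add_distrib]
  congr 1
  have : ∀ x : Fin n, (if x = e.symm j ∧ ¬ e x < x then 1 else 0) =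
      if x = e.symm j then (if ¬ e x < x then 1 else 0) else 0 := by
    intro x; by_cases h : x = e.symm j <;> simp [h]
  rw [Finset.sum_congr rfl (fun x _ => this x), Finset.sum_ite_eq' Finset.univ]
  simp only [mem_univ, if_pos]
  have : e (e.symm j) = j := by simp
  rw [this]
  by_cases h : j < e.symm j <;> simp [h]

lemma card_lt_symm {n : ℕ} (e : Perm (Fin n)) :
    (Finset.univ.filter fun j => j < e.symm j).card = defi e := by
  unfold defi
  apply Finset.card_bij (fun j _ => e.symm j)
  · intro j hj
    simp only [mem_filter, mem_univ, true_and] at hj ⊢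
    simpa using hj
  · intro a ha b hb h
    exact e.symm.injective h
  · intro i hi
    simp only [mem_filter, mem_univ, true_and] at hi
    exact ⟨e i, by simp [hi], by simp⟩

lemma defi_card_eq_eulerian (n k : ℕ) :
    (Finset.univ.filter fun e : Perm (Fin n) => defi e = k).card = eulerian n k := by
  induction n generalizing k with
  | zero =>
    have h : ∀ e : Perm (Fin 0), defi e = 0 := by
      intro e; simp [defi]
    cases k with
    | zero => simp [h, eulerian, Finset.filter_true_of_mem]
    | succ k => simp [h, eulerian, Finset.filter_false_of_mem]
  | succ n ih =>
    have step : ∀ k, (Finset.univ.filter fun e : Perm (Fin (n+1)) => defi e = k).card =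
        ∑ e : Perm (Fin n), ((if defi e = k then 1 else 0)
          + (defi e * (if defi e = k then 1 else 0)
            + (n - defi e) * (if defi e + 1 = k then 1 else 0))) := by
      intro k
      rw [card_filter]
      rw [← Equiv.sum_comp (Equiv.Perm.decomposeFin (n := n)).symm
        (fun σ => if defi σ = k then 1 else 0)]
      rw [Fintype.sum_prod_type]
      rw [Fin.sum_univ_succ]
      rw [Finset.sum_add_distrib]
      congr 1
      · exact Finset.sum_congr rfl fun e _ => by rw [defi_zero]
      · rw [Finset.sum_comm]
        refine Finset.sum_congr rfl fun e _ => ?_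
        have : ∀ j : Fin n, (if defi (Equiv.Perm.decomposeFin.symm (j.succ, e)) = k then 1 else 0)
            = (if j < e.symm j then (if defi e = k then 1 else 0)
                else (if defi e + 1 = k then 1 else 0)) := by
          intro j
          rw [defi_succ]
          by_cases h : j < e.symm j <;> simp [h]
        rw [Finset.sum_congr rfl (fun j _ => this j)]
        rw [Finset.sum_ite, Finset.sum_const, Finset.sum_const]
        rw [card_lt_symm]
        have hcard : (Finset.univ.filter fun j => ¬ j < e.symm j).card = n - defi e := by
          have := Finset.card_filter_add_card_filter_not
            (s := (Finset.univ : Finset (Fin n))) (p := fun j => j < e.symm j)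
          rw [card_lt_symm] at this
          have hu : (Finset.univ : Finset (Fin n)).card = n := by simp
          omega
        rw [hcard]
        simp [mul_comm]
    cases k with
    | zero =>
      rw [step 0]
      have : ∀ e : Perm (Fin n), ((if defi e = 0 then 1 else 0)
          + (defi e * (if defi e = 0 then 1 else 0)
            + (n - defi e) * (if defi e + 1 = 0 then 1 else 0)))
          = (if defi e = 0 then 1 else 0) := by
        intro e
        by_cases h : defi e = 0 <;> simp [h]
      rw [Finset.sum_congr rfl (fun e _ => this e)]
      rw [← card_filter, ih 0]
      rfl
    | succ k =>
      rw [step (k+1)]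
      have : ∀ e : Perm (Fin n), ((if defi e = k+1 then 1 else 0)
          + (defi e * (if defi e = k+1 then 1 else 0)
            + (n - defi e) * (if defi e + 1 = k+1 then 1 else 0)))
          = (k+2) * (if defi e = k+1 then 1 else 0)
            + (n - k) * (if defi e = k then 1 else 0) := by
        intro e
        by_cases h1 : defi e = k + 1
        · have h2 : ¬ defi e = k := by omega
          simp [h1, h2]; ring
        · by_cases h2 : defi e = k
          · simp [h1, h2]
          · simp [h1, h2]
      rw [Finset.sum_congr rfl (fun e _ => this e), Finset.sum_add_distrib,
        ← Finset.mul_sum, ← Finset.mul_sum, ← card_filter, ← card_filter, ih (k+1), ih k]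
      show _ = (k + 2) * eulerian n (k + 1) + (n + 1 - (k + 1)) * eulerian n k
      congr 2
      omega

lemma sum_pow_defi (n d : ℕ) (hn : 1 ≤ n) :
    ∑ σ : Perm (Fin n), d ^ defi σ = ∑ k ∈ Finset.range n, eulerian n k * d ^ k := by
  haveI : NeZero n := ⟨by omega⟩
  have hmaps : ∀ σ : Perm (Fin n), σ ∈ (Finset.univ : Finset (Perm (Fin n))) →
      defi σ ∈ Finset.range n := by
    intro σ _
    rw [Finset.mem_range]
    have hsub : (Finset.univ.filter fun i => σ i < i) ⊆ Finset.univ.erase (0 : Fin n) := by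
      intro i hi
      simp only [mem_filter, mem_univ, true_and] at hi
      refine Finset.mem_erase.mpr ⟨?_, Finset.mem_univ i⟩
      intro h
      rw [h] at hi
      have : ((σ (0 : Fin n)) : ℕ) < 0 := by simpa [Fin.lt_iff_val_lt_val] using hi
      omega
    calc defi σ ≤ (Finset.univ.erase (0 : Fin n)).card := Finset.card_le_card hsub
      _ < Finset.univ.card := Finset.card_erase_lt_of_mem (Finset.mem_univ _)
      _ = n := by simp
  rw [← Finset.sum_fiberwise_of_maps_to hmaps (fun σ => d ^ defi σ)]
  refine Finset.sum_congr rfl fun k _ => ?_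
  rw [← defi_card_eq_eulerian n k]
  have hrw : ∑ σ ∈ Finset.univ.filter (fun σ : Perm (Fin n) => defi σ = k), d ^ defi σ
      = ∑ σ ∈ Finset.univ.filter (fun σ : Perm (Fin n) => defi σ = k), d ^ k :=
    Finset.sum_congr rfl fun σ hσ => by rw [(Finset.mem_filter.mp hσ).2]
  rw [hrw, Finset.sum_const, smul_eq_mul]

lemma coeff_eq_perm_sum (n : ℕ) (d : ℤ) :
    MvPolynomial.coeff (∑ i : Fin n, Finsupp.single i 1)
      (∏ i : Fin n, ∑ j : Fin n,
        (if (j : ℕ) < (i : ℕ) then (MvPolynomial.C d) else 1) * MvPolynomial.X j) =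
    ∑ σ : Equiv.Perm (Fin n), ∏ i : Fin n, (if ((σ i : ℕ) < (i : ℕ)) then d else 1) := by
  classical
  have h1 : ∀ i j : Fin n, (if (j:ℕ) < (i:ℕ) then (C d : MvPolynomial (Fin n) ℤ) else 1) * X j
      = C (if (j:ℕ) < (i:ℕ) then d else 1) * X j := fun i j => by split_ifs <;> simp
  simp only [h1]
  rw [Fintype.prod_sum (f := fun (i j : Fin n) =>
    (C (if (j:ℕ) < (i:ℕ) then d else 1) : MvPolynomial (Fin n) ℤ) * X j)]
  rw [MvPolynomial.coeff_sum]
  have h3 : ∀ g : Fin n → Fin n,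
      ((∑ i : Fin n, Finsupp.single (g i) 1) = ∑ i : Fin n, Finsupp.single i (1:ℕ))
        ↔ Function.Bijective g := by
    intro g
    constructor
    · intro h
      rw [Fintype.bijective_iff_surjective_and_card]
      refine ⟨fun j => ?_, rfl⟩
      by_contra hj
      push_neg at hj
      have h' := congrArg (fun f : Fin n →₀ ℕ => f j) h
      simp only [Finset.sum_apply', Finsupp.single_apply] at h'
      rw [Finset.sum_eq_zero (fun i _ => by simp [hj i]),
        Finset.sum_ite_eq' Finset.univ j (fun _ => 1)] at h'
      simp at h'
    · intro hb
      exact Fintype.sum_bijective g hb _ _ (fun i => rfl)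
  have h2 : ∀ g : Fin n → Fin n,
      MvPolynomial.coeff (∑ i : Fin n, Finsupp.single i 1)
        (∏ i : Fin n, (C (if ((g i : ℕ) < (i:ℕ)) then d else 1) : MvPolynomial (Fin n) ℤ) * X (g i))
      = if Function.Bijective g then (∏ i : Fin n, if ((g i:ℕ) < (i:ℕ)) then d else 1) else 0 := by
    intro g
    rw [Finset.prod_mul_distrib, ← map_prod]
    have hX0 : ∀ j : Fin n, (X j : MvPolynomial (Fin n) ℤ) = monomial (Finsupp.single j 1) 1 :=
      fun j => rfl
    simp only [hX0]
    rw [← monomial_sum_one]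
    rw [MvPolynomial.coeff_C_mul, MvPolynomial.coeff_monomial]
    rw [if_congr (h3 g) rfl rfl]
    split_ifs <;> simp
  rw [Finset.sum_congr rfl (fun g _ => h2 g)]
  rw [← Finset.sum_filter]
  symm
  refine Finset.sum_bij (fun (σ : Perm (Fin n)) _ => ⇑σ) ?_ ?_ ?_ ?_
  · intro σ _
    exact Finset.mem_filter.mpr ⟨Finset.mem_univ _, σ.bijective⟩
  · intro a _ b _ h
    exact Equiv.coe_fn_injective h
  · intro g hg
    simp only [Finset.mem_filter] at hg
    exact ⟨Equiv.ofBijective g hg.2, Finset.mem_univ _, rfl⟩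
  · intro σ _
    rfl

/-- The coefficient of the square-free monomial `h 1 ⋯ h n` in
`(h 1 + ⋯ + h n) · ∏_{i=2}^{n} (d (h 1 + ⋯ + h_{i−1}) + h i + ⋯ + h n)`
equals `Σ_{k=0}^{n−1} A(n,k) d^k`, where `A(n,k)` are the Eulerian numbers.
(The first factor corresponds to index `i = 0` below, where no variable is scaled by `d`.) -/
theorem eulerian_coefficient_identity (n d : ℕ) (hn : 1 ≤ n) (hd : 1 ≤ d) :
    MvPolynomial.coeff (∑ i : Fin n, Finsupp.single i 1)
      (∏ i : Fin n, ∑ j : Fin n,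
        (if (j : ℕ) < (i : ℕ) then (MvPolynomial.C (d : ℤ)) else 1) * MvPolynomial.X j) =
    ∑ k ∈ Finset.range n, (eulerian n k : ℤ) * (d : ℤ) ^ k := by
  rw [coeff_eq_perm_sum]
  have hprod : ∀ σ : Perm (Fin n),
      (∏ i : Fin n, (if ((σ i : ℕ) < (i : ℕ)) then (d:ℤ) else 1)) = (d:ℤ) ^ defi σ := by
    intro σ
    classical
    rw [Finset.prod_ite, Finset.prod_const, Finset.prod_const_one, mul_one]
    congr 1
  rw [Finset.sum_congr rfl (fun σ _ => hprod σ)]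
  have hcast : (∑ σ : Perm (Fin n), (d:ℤ) ^ defi σ)
      = ((∑ σ : Perm (Fin n), d ^ defi σ : ℕ) : ℤ) := by push_cast; rfl
  rw [hcast, sum_pow_defi n d hn]
  push_cast
  rfl
end

section
/- Let e ∈ ℝ^d, e ≠ 0, and let A_1, …, A_n be nonempty closed affine subspaces of ℝ^d. Suppose there exist points a_k ∈ A_k and reals 0 < t_1 < t_2 < ⋯ < t_n < 1 with a_k = t_k · e. Then min over b_k ∈ A_k of ( ‖b_1‖ + Σ_{k=1}^{n−1} ‖b_{k+1} − b_k‖ + ‖e − b_n‖ ) = ‖e‖, attained at (a_1,…,a_n). -/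
theorem Fin.sum_succ_sub_castSucc {M : Type*} [AddCommGroup M] {m : ℕ} (f : Fin (m + 1) → M) :
    ∑ i : Fin m, (f i.succ - f i.castSucc) = f (Fin.last m) - f 0 := by
  induction m with
  | zero => simp
  | succ m ih =>
    have h := ih (f ∘ Fin.castSucc)
    simp only [Function.comp_apply, Fin.castSucc_zero] at h
    rw [Fin.sum_univ_castSucc]
    simp only [Fin.succ_castSucc, Fin.succ_last, h]
    abel

theorem norm_sub_le_sum_norm_succ_sub {E : Type*} [SeminormedAddCommGroup E] {m : ℕ}
    (f : Fin (m + 1) → E) :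
    ‖f (Fin.last m) - f 0‖ ≤ ∑ i : Fin m, ‖f i.succ - f i.castSucc‖ :=
  Fin.sum_succ_sub_castSucc f ▸ norm_sum_le _ _

theorem sum_norm_succ_smul_sub_castSucc_smul {E : Type*} [SeminormedAddCommGroup E]
    [NormedSpace ℝ E] {m : ℕ} {t : Fin (m + 1) → ℝ} (ht : Monotone t) (e : E) :
    ∑ i : Fin m, ‖t i.succ • e - t i.castSucc • e‖ = (t (Fin.last m) - t 0) * ‖e‖ := by
  have hstep (i : Fin m) : ‖t i.succ • e - t i.castSucc • e‖ = (t i.succ - t i.castSucc) * ‖e‖ := by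
    rw [← sub_smul, norm_smul, Real.norm_of_nonneg (sub_nonneg.2 (ht i.castSucc_lt_succ.le))]
  simp only [hstep, ← Finset.sum_mul, Fin.sum_succ_sub_castSucc]

theorem ordered_incidence_gives_min_general (d m : ℕ) (e : EuclideanSpace ℝ (Fin d))
    (A : Fin (m + 1) → AffineSubspace ℝ (EuclideanSpace ℝ (Fin d)))
    (a : Fin (m + 1) → EuclideanSpace ℝ (Fin d)) (t : Fin (m + 1) → ℝ)
    (hts : StrictMono t)
    (ht0 : 0 < t 0) (ht1 : t (Fin.last m) < 1)
    (hat : ∀ k, a k = t k • e) :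
    (‖a 0‖ + (∑ i : Fin m, ‖a i.succ - a i.castSucc‖) + ‖e - a (Fin.last m)‖ = ‖e‖) ∧
    ∀ b : Fin (m + 1) → EuclideanSpace ℝ (Fin d), (∀ k, b k ∈ A k) →
      ‖e‖ ≤ ‖b 0‖ + (∑ i : Fin m, ‖b i.succ - b i.castSucc‖) + ‖e - b (Fin.last m)‖ := by
  refine ⟨?_, fun b _ => ?_⟩
  · obtain rfl : a = fun k => t k • e := funext hat
    have hlast : e - t (Fin.last m) • e = (1 - t (Fin.last m)) • e := by
      rw [sub_smul, one_smul]
    rw [sum_norm_succ_smul_sub_castSucc_smul hts.monotone, hlast, norm_smul, norm_smul,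
      Real.norm_of_nonneg ht0.le, Real.norm_of_nonneg (sub_nonneg.2 ht1.le)]
    ring
  · calc ‖e‖ = ‖b 0 + (b (Fin.last m) - b 0) + (e - b (Fin.last m))‖ := by congr 1; abel
      _ ≤ ‖b 0‖ + ‖b (Fin.last m) - b 0‖ + ‖e - b (Fin.last m)‖ := norm_add₃_le
      _ ≤ _ := by gcongr; exact norm_sub_le_sum_norm_succ_sub b

/-- If the straight segment from `0` to `e ≠ 0` meets the hinges
`A 0, …, A m` at points `a k = t k • e` with `0 < t 0 < ⋯ < t m < 1` (natural order),
then the minimal polygonal arc length from `0` to `e` visiting the hinges in order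
equals `‖e‖`, attained at `(a 0, …, a m)`. -/
theorem ordered_incidence_gives_min (d m : ℕ) (e : EuclideanSpace ℝ (Fin d)) (he : e ≠ 0)
    (A : Fin (m + 1) → AffineSubspace ℝ (EuclideanSpace ℝ (Fin d)))
    (hne : ∀ k, (A k : Set (EuclideanSpace ℝ (Fin d))).Nonempty)
    (hcl : ∀ k, IsClosed (A k : Set (EuclideanSpace ℝ (Fin d))))
    (a : Fin (m + 1) → EuclideanSpace ℝ (Fin d)) (t : Fin (m + 1) → ℝ)
    (haA : ∀ k, a k ∈ A k) (hts : StrictMono t)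
    (ht0 : 0 < t 0) (ht1 : t (Fin.last m) < 1)
    (hat : ∀ k, a k = t k • e) :
    (‖a 0‖ + (∑ i : Fin m, ‖a i.succ - a i.castSucc‖) + ‖e - a (Fin.last m)‖ = ‖e‖) ∧
    ∀ b : Fin (m + 1) → EuclideanSpace ℝ (Fin d), (∀ k, b k ∈ A k) →
      ‖e‖ ≤ ‖b 0‖ + (∑ i : Fin m, ‖b i.succ - b i.castSucc‖) + ‖e - b (Fin.last m)‖ :=
  ordered_incidence_gives_min_general d m e A a t hts ht0 ht1 hat
end
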